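/- arXiv:2412.03234 — 3 statements merged into one kernel-verified Lean document; each statement's English description precedes it below -/
import Mathlib

section
/- Let K be a field, n ≥ 1, and let x ∈ GL_n(K). Let S be the normal subgroup of GL_n(K) consisting of the scalar matrices {λ·I_n : λ ∈ Kˣ}, let π : GL_n(K) → GL_n(K)/S be the quotient homomorphism, and set A(x) = {λ ∈ Kˣ : there exists g ∈ GL_n(K) with g x g⁻¹ = λ·x}. Then: A(x) is a subgroup of Kˣ; the image π(C_{GL_n(K)}(x)) of the centralizer of x in GL_n(K) is a normal subgroup of the centralizer C of π(x) in GL_n(K)/S; and the quotient group C / π(C_{GL_n(K)}(x)) is isomorphic to A(x). -/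
open scoped MatrixGroups

/-- The subgroup of `GL n K` consisting of the scalar matrices `λ • I` with `λ ∈ Kˣ`. -/
noncomputable def scalarSubgroup (K : Type*) [Field K] (n : ℕ) : Subgroup (GL (Fin n) K) :=
  (Units.map (algebraMap K (Matrix (Fin n) (Fin n) K)).toMonoidHom).range

instance scalarSubgroup_normal (K : Type*) [Field K] (n : ℕ) : (scalarSubgroup K n).Normal := by
  constructor
  rintro s ⟨u, rfl⟩ g
  refine ⟨u, ?_⟩
  apply Units.ext
  show (algebraMap K (Matrix (Fin n) (Fin n) K)) (u : K)
      = (g : Matrix (Fin n) (Fin n) K) * (algebraMap K (Matrix (Fin n) (Fin n) K) (u : K))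
        * ((g⁻¹ : GL (Fin n) K) : Matrix (Fin n) (Fin n) K)
  rw [← Algebra.commutes (u : K) (g : Matrix (Fin n) (Fin n) K), mul_assoc]
  have h : (g : Matrix (Fin n) (Fin n) K) * ((g⁻¹ : GL (Fin n) K) : Matrix (Fin n) (Fin n) K)
      = 1 := by
    rw [← Units.val_mul, mul_inv_cancel, Units.val_one]
  rw [h, mul_one]

section Aux
variable {K : Type*} [Field K] {n : ℕ}

/-- The scalar embedding `Kˣ →* GL n K`. -/
noncomputable def sclr (K : Type*) [Field K] (n : ℕ) : Kˣ →* GL (Fin n) K :=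
  Units.map (algebraMap K (Matrix (Fin n) (Fin n) K)).toMonoidHom

lemma sclr_val (a : Kˣ) :
    Units.val (sclr K n a) = algebraMap K (Matrix (Fin n) (Fin n) K) (a : K) :=
  rfl

lemma sclr_mem (a : Kˣ) : sclr K n a ∈ scalarSubgroup K n := ⟨a, rfl⟩

lemma mem_scalar {s : GL (Fin n) K} (hs : s ∈ scalarSubgroup K n) : ∃ a : Kˣ, sclr K n a = s := hs

lemma sclr_central (a : Kˣ) (g : GL (Fin n) K) : sclr K n a * g = g * sclr K n a := by
  apply Units.ext
  rw [Units.val_mul, Units.val_mul, sclr_val]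
  exact Algebra.commutes ((a : K)) ((g : Matrix (Fin n) (Fin n) K))

lemma sclr_inj (hn : 1 ≤ n) : Function.Injective (sclr K n) := by
  intro a b h
  have h2 : (algebraMap K (Matrix (Fin n) (Fin n) K)) (a : K)
      = (algebraMap K (Matrix (Fin n) (Fin n) K)) (b : K) := congrArg Units.val h
  have := congrFun (congrFun h2 ⟨0, hn⟩) ⟨0, hn⟩
  simp [Matrix.algebraMap_eq_diagonal, Matrix.diagonal_apply_eq] at this
  exact Units.ext this

lemma cond_iff (x g : GL (Fin n) K) (a : Kˣ) :
    ((g * x * g⁻¹ : GL (Fin n) K) : Matrix (Fin n) (Fin n) K)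
      = (a : K) • (x : Matrix (Fin n) (Fin n) K)
    ↔ g * x * g⁻¹ = sclr K n a * x := by
  rw [Units.ext_iff]
  simp only [Units.val_mul]
  rw [sclr_val, Algebra.smul_def]


lemma sclr_conj_mul {x g h : GL (Fin n) K} {a b : Kˣ}
    (hg : g * x * g⁻¹ = sclr K n a * x) (hh : h * x * h⁻¹ = sclr K n b * x) :
    (g * h) * x * (g * h)⁻¹ = sclr K n (a * b) * x := by
  have e1 : (g * h) * x * (g * h)⁻¹ = g * (h * x * h⁻¹) * g⁻¹ := by group
  rw [e1, hh, ← mul_assoc, ← sclr_central, mul_assoc, mul_assoc, ← mul_assoc g x g⁻¹, hg,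
    ← mul_assoc, ← map_mul, mul_comm b a]

lemma lam_eq (hn : 1 ≤ n) {x g g' : GL (Fin n) K} {a b : Kˣ}
    (hmk : QuotientGroup.mk' (scalarSubgroup K n) g = QuotientGroup.mk' (scalarSubgroup K n) g')
    (hg : g * x * g⁻¹ = sclr K n a * x) (hg' : g' * x * g'⁻¹ = sclr K n b * x) : a = b := by
  rw [QuotientGroup.mk'_eq_mk'] at hmk
  obtain ⟨s, hs, rfl⟩ := hmk
  obtain ⟨c, rfl⟩ := mem_scalar hs
  have hskey : (g * sclr K n c) * x * (g * sclr K n c)⁻¹ = g * x * g⁻¹ := by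
    have e : (g * sclr K n c) * x * (g * sclr K n c)⁻¹
        = g * (sclr K n c * x * (sclr K n c)⁻¹) * g⁻¹ := by group
    have e2 : sclr K n c * x * (sclr K n c)⁻¹ = x := by
      rw [sclr_central, mul_assoc, mul_inv_cancel, mul_one]
    rw [e, e2]
  rw [hskey, hg] at hg'
  exact sclr_inj hn (mul_right_cancel hg')

lemma exists_lift {x : GL (Fin n) K} {c : GL (Fin n) K ⧸ scalarSubgroup K n}
    (hc : c ∈ Subgroup.centralizer {QuotientGroup.mk' (scalarSubgroup K n) x}) :
    ∃ g : GL (Fin n) K, ∃ a : Kˣ,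
      QuotientGroup.mk' (scalarSubgroup K n) g = c ∧ g * x * g⁻¹ = sclr K n a * x := by
  obtain ⟨g, rfl⟩ := QuotientGroup.mk'_surjective (scalarSubgroup K n) c
  have hcomm := Subgroup.mem_centralizer_iff.mp hc _ (Set.mem_singleton _)
  rw [← map_mul, ← map_mul, QuotientGroup.mk'_eq_mk'] at hcomm
  obtain ⟨s, hs, hseq⟩ := hcomm
  obtain ⟨a, rfl⟩ := mem_scalar hs
  refine ⟨g, a, rfl, ?_⟩
  -- hseq : x * g * sclr a = g * x
  have : g * x * g⁻¹ = (x * g * sclr K n a) * g⁻¹ := by rw [hseq]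
  rw [this, mul_assoc x g, ← sclr_central, ← mul_assoc x (sclr K n a) g,
    mul_assoc (x * sclr K n a), mul_inv_cancel, mul_one, ← sclr_central]

end Aux

lemma sclr_conj_inv {K : Type*} [Field K] {n : ℕ} {x g : GL (Fin n) K} {a : Kˣ}
    (hg : g * x * g⁻¹ = sclr K n a * x) :
    g⁻¹ * x * (g⁻¹)⁻¹ = sclr K n a⁻¹ * x := by
  have h1 : x = g⁻¹ * (sclr K n a * x) * g := by rw [← hg]; group
  have h2 : x = sclr K n a * (g⁻¹ * x * g) := by
    nth_rewrite 1 [h1]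
    rw [← mul_assoc g⁻¹ (sclr K n a) x, ← sclr_central a g⁻¹,
      mul_assoc (sclr K n a) g⁻¹ x, mul_assoc (sclr K n a) (g⁻¹ * x) g]
  have h3 : sclr K n a⁻¹ * x = g⁻¹ * x * g := by
    nth_rewrite 1 [h2]
    rw [← mul_assoc, ← map_mul, inv_mul_cancel, map_one, one_mul]
  rw [inv_inv]
  exact h3.symm


/-- For `x ∈ GL_n(K)`, the set
`A(x) = {λ ∈ Kˣ | ∃ g, g x g⁻¹ = λ·x}` is (the carrier of) a subgroup of `Kˣ`; moreover,
denoting by `π : GL_n(K) → PGL_n(K) = GL_n(K)/S` the quotient by the scalar matrices,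
the image `π(C_{GL_n}(x))` of the centralizer of `x` is contained in the centralizer `C` of
`π x`, and there is a surjective homomorphism `C →* A(x)` whose kernel is exactly
`π(C_{GL_n}(x))`; in particular the latter is normal in `C` and `C / π(C_{GL_n}(x)) ≅ A(x)`. -/
theorem pgl_component_group_eq_scalar_stabilizer
    (K : Type*) [Field K] (n : ℕ) (hn : 1 ≤ n) (x : GL (Fin n) K) :
    ∃ A : Subgroup Kˣ,
      (A : Set Kˣ) = {lam : Kˣ | ∃ g : GL (Fin n) K,
          ((g * x * g⁻¹ : GL (Fin n) K) : Matrix (Fin n) (Fin n) K)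
            = (lam : K) • (x : Matrix (Fin n) (Fin n) K)} ∧
      (Subgroup.centralizer {x}).map (QuotientGroup.mk' (scalarSubgroup K n))
        ≤ Subgroup.centralizer {QuotientGroup.mk' (scalarSubgroup K n) x} ∧
      ∃ f : Subgroup.centralizer {QuotientGroup.mk' (scalarSubgroup K n) x} →* A,
        Function.Surjective f ∧
        f.ker = ((Subgroup.centralizer {x}).map
            (QuotientGroup.mk' (scalarSubgroup K n))).subgroupOf
          (Subgroup.centralizer {QuotientGroup.mk' (scalarSubgroup K n) x}) := by
  classical
  let A : Subgroup Kˣ :=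
    { carrier := {lam : Kˣ | ∃ g : GL (Fin n) K,
          ((g * x * g⁻¹ : GL (Fin n) K) : Matrix (Fin n) (Fin n) K)
            = (lam : K) • (x : Matrix (Fin n) (Fin n) K)}
      one_mem' := by
        refine ⟨1, (cond_iff x 1 1).mpr ?_⟩
        simp
      mul_mem' := by
        rintro a b ⟨g, hg⟩ ⟨h, hh⟩
        exact ⟨g * h, (cond_iff x (g * h) (a * b)).mpr
          (sclr_conj_mul ((cond_iff x g a).mp hg) ((cond_iff x h b).mp hh))⟩
      inv_mem' := by
        rintro a ⟨g, hg⟩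
        exact ⟨g⁻¹, (cond_iff x g⁻¹ a⁻¹).mpr (sclr_conj_inv ((cond_iff x g a).mp hg))⟩ }
  have key := fun c : Subgroup.centralizer {QuotientGroup.mk' (scalarSubgroup K n) x} =>
    exists_lift (x := x) c.2
  choose g lam hg1 hg2 using key
  have memA : ∀ c, lam c ∈ A := fun c => ⟨g c, (cond_iff x (g c) (lam c)).mpr (hg2 c)⟩
  refine ⟨A, rfl, ?_, MonoidHom.mk' (fun c => ⟨lam c, memA c⟩) ?_, ?_, ?_⟩
  · rintro y hy
    rw [Subgroup.mem_map] at hy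
    obtain ⟨k, hk, rfl⟩ := hy
    rw [Subgroup.mem_centralizer_iff]
    rintro z hz
    rw [Set.mem_singleton_iff] at hz
    subst hz
    rw [← map_mul, ← map_mul, Subgroup.mem_centralizer_iff.mp hk x (Set.mem_singleton _)]
  · -- multiplicativity
    intro c d
    have hmk : QuotientGroup.mk' (scalarSubgroup K n) (g (c * d))
        = QuotientGroup.mk' (scalarSubgroup K n) (g c * g d) := by
      rw [map_mul, hg1, hg1, hg1]
      rfl
    exact Subtype.ext (lam_eq hn hmk (hg2 _) (sclr_conj_mul (hg2 c) (hg2 d)))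
  · -- surjectivity
    rintro ⟨a, ha⟩
    obtain ⟨h, hh⟩ := ha
    have hh' : h * x * h⁻¹ = sclr K n a * x := (cond_iff x h a).mp hh
    have hxh : h * x = sclr K n a * (x * h) := by
      calc h * x = (h * x * h⁻¹) * h := by group
        _ = sclr K n a * x * h := by rw [hh']
        _ = sclr K n a * (x * h) := by rw [mul_assoc]
    have hπs : QuotientGroup.mk' (scalarSubgroup K n) (sclr K n a) = 1 := by
      have : sclr K n a ∈ (QuotientGroup.mk' (scalarSubgroup K n)).ker := by
        rw [QuotientGroup.ker_mk']
        exact sclr_mem a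
      exact this
    have hc : QuotientGroup.mk' (scalarSubgroup K n) h
        ∈ Subgroup.centralizer {QuotientGroup.mk' (scalarSubgroup K n) x} := by
      rw [Subgroup.mem_centralizer_iff]
      rintro z hz
      rw [Set.mem_singleton_iff] at hz
      subst hz
      rw [← map_mul, ← map_mul]
      calc QuotientGroup.mk' (scalarSubgroup K n) (x * h)
          = QuotientGroup.mk' (scalarSubgroup K n) (sclr K n a)
            * QuotientGroup.mk' (scalarSubgroup K n) (x * h) := by rw [hπs, one_mul]
        _ = QuotientGroup.mk' (scalarSubgroup K n) (sclr K n a * (x * h)) :=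
            (map_mul _ _ _).symm
        _ = QuotientGroup.mk' (scalarSubgroup K n) (h * x) := by rw [← hxh]
    refine ⟨⟨QuotientGroup.mk' (scalarSubgroup K n) h, hc⟩, ?_⟩
    refine Subtype.ext ?_
    exact lam_eq hn (hg1 _) (hg2 _) hh'
  · -- kernel
    ext c
    rw [MonoidHom.mem_ker, Subgroup.mem_subgroupOf, Subgroup.mem_map]
    constructor
    · intro h1
      have hl1 : lam c = 1 := congrArg Subtype.val h1
      have hx : g c * x * (g c)⁻¹ = x := by
        have := hg2 c
        rw [hl1, map_one, one_mul] at this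
        exact this
      refine ⟨g c, ?_, hg1 c⟩
      rw [Subgroup.mem_centralizer_iff]
      rintro z hz
      rw [Set.mem_singleton_iff] at hz
      rw [hz]
      calc x * g c = (g c * x * (g c)⁻¹) * g c := by rw [hx]
        _ = g c * x := by group
    · rintro ⟨k, hk, hkc⟩
      have hkx : k * x * k⁻¹ = sclr K n 1 * x := by
        rw [map_one, one_mul]
        rw [Subgroup.mem_centralizer_iff] at hk
        have := hk x (Set.mem_singleton _)
        rw [← this]
        group
      have hmk : QuotientGroup.mk' (scalarSubgroup K n) (g c)
          = QuotientGroup.mk' (scalarSubgroup K n) k := by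
        rw [hg1 c, ← hkc]
      exact Subtype.ext (lam_eq hn hmk (hg2 c) hkx)
end

section
/- Let K be an algebraically closed field, let g ∈ GL_n(K), and let λ ∈ Kˣ have finite multiplicative order d and satisfy that λ·g is conjugate to g in GL_n(K). Then for every positive integer m, d divides the number of elements a ∈ K whose multiplicity as a root of the characteristic polynomial of g equals m. -/
open scoped MatrixGroups


/-- If a finite set of nonzero field elements is closed under multiplication by a unit
of finite order `d`, then `d` divides its cardinality. -/
lemma aux_orbit_dvd {K : Type*} [Field K] (lam : Kˣ) {d : ℕ} (hd : 0 < d)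
    (hord : orderOf lam = d) :
    ∀ N : ℕ, ∀ S : Set K, S.Finite → S.ncard ≤ N → 0 ∉ S →
      (∀ a ∈ S, (lam : K) * a ∈ S) → d ∣ S.ncard := by
  have hmod : ∀ mn : ℕ, lam ^ (mn % d) = lam ^ mn := by
    intro mn
    rw [show mn % d = mn % orderOf lam by rw [hord]]
    exact pow_mod_orderOf ..
  have hlamd : lam ^ d = 1 := hord ▸ pow_orderOf_eq_one lam
  intro N
  induction N with
  | zero =>
    intro S hfin hle h0 hcl
    simp [Nat.le_zero.mp hle]
  | succ N IH =>
    intro S hfin hle h0 hcl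
    rcases S.eq_empty_or_nonempty with rfl | ⟨a, ha⟩
    · simp
    have hpow : ∀ k : ℕ, ∀ b ∈ S, ((lam ^ k : Kˣ) : K) * b ∈ S := by
      intro k
      induction k with
      | zero => intro b hb; simpa using hb
      | succ k IHk =>
        intro b hb
        have h1 : (lam : K) * (((lam ^ k : Kˣ) : K) * b) ∈ S := hcl _ (IHk b hb)
        have h2 : ((lam ^ (k + 1) : Kˣ) : K) * b
            = (lam : K) * (((lam ^ k : Kˣ) : K) * b) := by
          rw [pow_succ, Units.val_mul]; ring
        rw [h2]; exact h1
    set f : Fin d → K := fun k => ((lam ^ (k : ℕ) : Kˣ) : K) * a with hf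
    have hane : a ≠ 0 := fun h => h0 (h ▸ ha)
    have hinj : Function.Injective f := by
      intro i j hij
      have h1 : ((lam ^ (i : ℕ) : Kˣ) : K) = ((lam ^ (j : ℕ) : Kˣ) : K) :=
        mul_right_cancel₀ hane hij
      have h2 : lam ^ (i : ℕ) = lam ^ (j : ℕ) := Units.ext h1
      have := pow_inj_mod.mp h2
      rw [hord, Nat.mod_eq_of_lt i.isLt, Nat.mod_eq_of_lt j.isLt] at this
      exact Fin.ext this
    set O : Set K := Set.range f with hO
    have hOfin : O.Finite := Set.finite_range f
    have hOS : O ⊆ S := by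
      rintro x ⟨k, rfl⟩
      exact hpow _ _ ha
    have hOcard : O.ncard = d := by
      rw [hO, ← Set.image_univ, Set.ncard_image_of_injective _ hinj, Set.ncard_univ,
        Nat.card_eq_fintype_card, Fintype.card_fin]
    have hSO : (S \ O).ncard + O.ncard = S.ncard :=
      Set.ncard_diff_add_ncard_of_subset hOS hfin
    rw [hOcard] at hSO
    have hcl' : ∀ b ∈ S \ O, (lam : K) * b ∈ S \ O := by
      rintro b ⟨hbS, hbO⟩
      refine ⟨hcl _ hbS, ?_⟩
      rintro ⟨k, hk⟩
      apply hbO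
      refine ⟨⟨(d - 1 + (k : ℕ)) % d, Nat.mod_lt _ hd⟩, ?_⟩
      have hb : ((lam ^ (k : ℕ) : Kˣ) : K) * a = (lam : K) * b := hk
      have : f ⟨(d - 1 + (k : ℕ)) % d, Nat.mod_lt _ hd⟩
          = ((lam ^ (d - 1 + (k : ℕ)) : Kˣ) : K) * a := by
        simp only [hf]
        rw [hmod]
      rw [this]
      have h3 : lam ^ (d - 1) * lam = 1 := by
        rw [← pow_succ, Nat.sub_add_cancel hd, hlamd]
      calc ((lam ^ (d - 1 + (k : ℕ)) : Kˣ) : K) * a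
          = ((lam ^ (d - 1) : Kˣ) : K) * (((lam ^ (k : ℕ) : Kˣ) : K) * a) := by
            rw [pow_add, Units.val_mul]; ring
        _ = ((lam ^ (d - 1) : Kˣ) : K) * ((lam : K) * b) := by rw [hb]
        _ = ((lam ^ (d - 1) * lam : Kˣ) : K) * b := by rw [Units.val_mul]; ring
        _ = b := by rw [h3]; simp
    have hdvd : d ∣ (S \ O).ncard := by
      apply IH (S \ O) hfin.diff _ (fun h => h0 h.1) hcl'
      omega
    rcases hdvd with ⟨t, ht⟩
    exact ⟨t + 1, by rw [← hSO, ht]; ring⟩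


open Polynomial

lemma aux_eval_charpoly {K : Type*} [Field K] {n : ℕ} (M : Matrix (Fin n) (Fin n) K) (x : K) :
    (Matrix.charpoly M).eval x = (x • (1 : Matrix (Fin n) (Fin n) K) - M).det := by
  rw [Matrix.charpoly, ← Polynomial.coe_evalRingHom, RingHom.map_det]
  congr 1
  ext i j
  by_cases hij : i = j <;>
    simp [Matrix.charmatrix_apply, Matrix.one_apply, hij, Matrix.smul_apply,
      Matrix.sub_apply, Matrix.diagonal_apply]

open scoped MatrixGroups

lemma aux_rootMultiplicity_mul (K : Type*) [Field K] [IsAlgClosed K]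
    (n : ℕ) (g : GL (Fin n) K) (lam : Kˣ)
    (h : ∃ c : GL (Fin n) K,
      ((c * g * c⁻¹ : GL (Fin n) K) : Matrix (Fin n) (Fin n) K)
        = (lam : K) • (g : Matrix (Fin n) (Fin n) K)) :
    ∀ a : K, Polynomial.rootMultiplicity ((lam : K) * a)
        (Matrix.charpoly (g : Matrix (Fin n) (Fin n) K))
      = Polynomial.rootMultiplicity a (Matrix.charpoly (g : Matrix (Fin n) (Fin n) K)) := by
  obtain ⟨c, hc⟩ := h
  classical
  set p := Matrix.charpoly (g : Matrix (Fin n) (Fin n) K) with hpdef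
  have hmonic : p.Monic := Matrix.charpoly_monic _
  have hsplits : p.Splits := IsAlgClosed.splits p
  have hprod : p = (p.roots.map fun a => X - C a).prod :=
    hsplits.eq_prod_roots_of_monic hmonic
  have hcard : Multiset.card p.roots = n := by
    rw [Polynomial.splits_iff_card_roots.mp hsplits, hpdef,
      Matrix.charpoly_natDegree_eq_dim, Fintype.card_fin]
  -- determinant of conjugation
  have hdc : ((c : Matrix (Fin n) (Fin n) K)).det * ((↑(c⁻¹) : Matrix (Fin n) (Fin n) K)).det
      = 1 := by
    rw [← Matrix.det_mul, ← Units.val_mul, mul_inv_cancel, Units.val_one, Matrix.det_one]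
  have hconj : ∀ x : K, (x • (1 : Matrix (Fin n) (Fin n) K) - (lam : K) • (g : Matrix _ _ K)).det
      = (x • (1 : Matrix (Fin n) (Fin n) K) - (g : Matrix _ _ K)).det := by
    intro x
    rw [← hc]
    have h2 : x • (1 : Matrix (Fin n) (Fin n) K) - ((c * g * c⁻¹ : GL (Fin n) K) : Matrix _ _ K)
        = (c : Matrix _ _ K) * (x • (1 : Matrix (Fin n) (Fin n) K) - (g : Matrix _ _ K))
            * (↑(c⁻¹) : Matrix _ _ K) := by
      rw [Units.val_mul, Units.val_mul, mul_sub, sub_mul, Matrix.mul_smul, mul_one,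
        Matrix.smul_mul]
      congr 1
      rw [← Units.val_mul, mul_inv_cancel, Units.val_one]
    rw [h2, Matrix.det_mul, Matrix.det_mul,
      mul_comm ((c : Matrix (Fin n) (Fin n) K)).det, mul_assoc, hdc, mul_one]
  -- the scaled product is p
  have hmain : ∀ x : K,
      Polynomial.eval x ((p.roots.map fun r => X - C ((lam : K) * r)).prod)
        = Polynomial.eval x p := by
    intro x
    have hlu : (lam : K) * ((lam⁻¹ : Kˣ) : K) = 1 := by
      rw [← Units.val_mul, mul_inv_cancel, Units.val_one]
    rw [Polynomial.eval_multiset_prod, Multiset.map_map]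
    have step1 : (p.roots.map (Polynomial.eval x ∘ fun r => X - C ((lam : K) * r)))
        = p.roots.map fun r => (lam : K) * (((lam⁻¹ : Kˣ) : K) * x - r) := by
      apply Multiset.map_congr rfl
      intro r _
      simp only [Function.comp_apply, Polynomial.eval_sub, Polynomial.eval_X, Polynomial.eval_C]
      rw [mul_sub, ← mul_assoc, hlu, one_mul]
    rw [step1, Multiset.prod_map_mul, Multiset.map_const', Multiset.prod_replicate, hcard]
    have step2 : (p.roots.map fun r => ((lam⁻¹ : Kˣ) : K) * x - r).prod
        = Polynomial.eval (((lam⁻¹ : Kˣ) : K) * x) p := by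
      conv_rhs => rw [hprod]
      rw [Polynomial.eval_multiset_prod, Multiset.map_map]
      apply congrArg
      apply Multiset.map_congr rfl
      intro r _
      simp
    rw [step2, hpdef, aux_eval_charpoly, aux_eval_charpoly]
    rw [← hconj x]
    have h4 : (lam : K) • ((((lam⁻¹ : Kˣ) : K) * x) • (1 : Matrix (Fin n) (Fin n) K)
          - (g : Matrix (Fin n) (Fin n) K))
        = x • (1 : Matrix (Fin n) (Fin n) K) - (lam : K) • (g : Matrix (Fin n) (Fin n) K) := by
      rw [smul_sub, smul_smul, ← mul_assoc, hlu, one_mul]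
    rw [← h4, Matrix.det_smul, Fintype.card_fin]
  have hq : ((p.roots.map fun r => (lam : K) * r).map fun a => X - C a).prod = p := by
    rw [Multiset.map_map]
    exact Polynomial.funext hmain
  have hroots : p.roots.map (fun r => (lam : K) * r) = p.roots := by
    conv_rhs => rw [← hq, Polynomial.roots_multiset_prod_X_sub_C]
  intro a
  have hinj : Function.Injective (fun r : K => (lam : K) * r) :=
    fun r s hrs => mul_left_cancel₀ (Units.ne_zero lam) hrs
  rw [← Polynomial.count_roots, ← Polynomial.count_roots]
  conv_lhs => rw [← hroots]
  rw [Multiset.count_map_eq_count' _ _ hinj]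



/-- Let `K` be an algebraically closed field, `g ∈ GL_n(K)`, and let
`λ ∈ Kˣ` have finite multiplicative order `d` and satisfy that `λ · g` is conjugate to `g`
in `GL_n(K)`.  Then for every positive integer `m`, `d` divides the number of elements
`a ∈ K` whose multiplicity as a root of the characteristic polynomial of `g` is exactly
`m`. -/
theorem orderOf_dvd_card_eigenvalues_of_multiplicity (K : Type*) [Field K] [IsAlgClosed K]
    (n : ℕ) (g : GL (Fin n) K) (lam : Kˣ) (d : ℕ) (hd : 0 < d) (hord : orderOf lam = d)
    (h : ∃ c : GL (Fin n) K,
      ((c * g * c⁻¹ : GL (Fin n) K) : Matrix (Fin n) (Fin n) K)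
        = (lam : K) • (g : Matrix (Fin n) (Fin n) K)) :
    ∀ m : ℕ, 0 < m →
      d ∣ Set.ncard {a : K |
        Polynomial.rootMultiplicity a (Matrix.charpoly (g : Matrix (Fin n) (Fin n) K)) = m} := by
  classical
  intro m hm
  set p := Matrix.charpoly (g : Matrix (Fin n) (Fin n) K) with hpdef
  set S : Set K := {a : K | Polynomial.rootMultiplicity a p = m} with hSdef
  have hkey := aux_rootMultiplicity_mul K n g lam h
  have hsub : S ⊆ ↑p.roots.toFinset := by
    intro a haS
    have hcount : Multiset.count a p.roots = m := by
      rw [Polynomial.count_roots]; exact haS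
    have : 0 < Multiset.count a p.roots := by omega
    simpa using Multiset.count_pos.mp this
  have hfin : S.Finite := Set.Finite.subset (p.roots.toFinset.finite_toSet) hsub
  have hdetg : ((g : Matrix (Fin n) (Fin n) K)).det ≠ 0 := by
    have hu : IsUnit ((g : Matrix (Fin n) (Fin n) K)).det :=
      (Matrix.isUnit_iff_isUnit_det _).mp (Units.isUnit g)
    exact hu.ne_zero
  have h0 : (0 : K) ∉ S := by
    intro h0S
    have hmm : Polynomial.rootMultiplicity (0 : K) p = m := h0S
    have hroot : p.IsRoot 0 := by
      by_contra hcon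
      rw [Polynomial.rootMultiplicity_eq_zero hcon] at hmm
      omega
    rw [Polynomial.IsRoot, hpdef, aux_eval_charpoly, zero_smul, zero_sub,
      Matrix.det_neg] at hroot
    exact mul_ne_zero (pow_ne_zero (Fintype.card (Fin n)) (neg_ne_zero.mpr (one_ne_zero (α := K)))) hdetg hroot
  have hcl : ∀ a ∈ S, (lam : K) * a ∈ S := by
    intro a haS
    have : Polynomial.rootMultiplicity ((lam : K) * a) p
        = Polynomial.rootMultiplicity a p := hkey a
    simpa [hSdef, this] using haS
  exact aux_orbit_dvd lam hd hord S.ncard S hfin le_rfl h0 hcl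
end

section
/- Let K be an algebraically closed field, let q ≥ 2 be a natural number, and let z ∈ Kˣ satisfy z^{q−1} = 1 and have multiplicative order exactly d. Then: (i) there exists α ∈ Kˣ with α^q = z·α; and (ii) for every such α and for every x ∈ Kˣ with x^{q−1} = 1, the least positive integer j such that (α·x)^{q^j} = α·x equals d. -/
/-- Let `K` be algebraically closed, `q ≥ 2`, and let `z ∈ Kˣ` satisfy
`z ^ (q − 1) = 1` and have multiplicative order exactly `d`.  Then (i) there exists
`α ∈ Kˣ` with `α ^ q = z · α`, and (ii) for every such `α` and every `x ∈ Kˣ` with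
`x ^ (q − 1) = 1`, the least positive integer `j` with `(α·x) ^ (q ^ j) = α·x` is `d`. -/
theorem frobenius_orbit_size_of_twisted_scalar (K : Type*) [Field K] [IsAlgClosed K]
    (q : ℕ) (hq : 2 ≤ q) (z : Kˣ) (hz : z ^ (q - 1) = 1) (d : ℕ) (hd : orderOf z = d) :
    (∃ α : Kˣ, α ^ q = z * α) ∧
      ∀ α : Kˣ, α ^ q = z * α →
        ∀ x : Kˣ, x ^ (q - 1) = 1 →
          IsLeast {j : ℕ | 0 < j ∧ (α * x) ^ q ^ j = α * x} d := by
  have hq1 : 0 < q - 1 := by omega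
  have hdpos : 0 < d := by
    rw [← hd]
    exact (isOfFinOrder_iff_pow_eq_one.mpr ⟨q - 1, hq1, hz⟩).orderOf_pos
  constructor
  · obtain ⟨a, ha⟩ := IsAlgClosed.exists_pow_nat_eq (z : K) hq1
    have ha0 : a ≠ 0 := by
      intro h
      rw [h, zero_pow (by omega)] at ha
      exact (Units.ne_zero z) ha.symm
    refine ⟨Units.mk0 a ha0, ?_⟩
    ext
    push_cast
    calc a ^ q = a ^ (q - 1) * a := by rw [← pow_succ]; congr 1; omega
    _ = z * a := by rw [ha]
  · intro α hα x hx
    have key : ∀ j : ℕ, (α * x) ^ q ^ j = z ^ j * (α * x) := by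
      intro j
      induction j with
      | zero => simp
      | succ n ih =>
        have hxq : x ^ q = x := by
          calc x ^ q = x ^ (q - 1) * x := by rw [← pow_succ]; congr 1; omega
          _ = x := by rw [hx, one_mul]
        calc (α * x) ^ q ^ (n + 1) = ((α * x) ^ q ^ n) ^ q := by
              rw [← pow_mul, pow_succ]
        _ = (z ^ n * (α * x)) ^ q := by rw [ih]
        _ = (z ^ n) ^ q * (α ^ q * x ^ q) := by rw [mul_pow, mul_pow]
        _ = (z ^ n) ^ q * (z * α * x) := by rw [hα, hxq]
        _ = z ^ (n + 1) * (α * x) := by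
            have hzq : (z ^ n) ^ q = z ^ n := by
              calc (z ^ n) ^ q = (z ^ n) ^ (q - 1) * z ^ n := by
                    rw [← pow_succ]; congr 1; omega
              _ = z ^ n := by rw [← pow_mul, mul_comm n, pow_mul, hz, one_pow, one_mul]
            rw [hzq, pow_succ, mul_assoc, mul_assoc]
    have mem_iff : ∀ j : ℕ, ((α * x) ^ q ^ j = α * x ↔ z ^ j = 1) := by
      intro j
      rw [key j]
      constructor
      · intro h
        nth_rewrite 2 [← one_mul (α * x)] at h
        exact mul_right_cancel h
      · intro h; rw [h, one_mul]
    constructor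
    · exact ⟨hdpos, (mem_iff d).mpr (by rw [← hd]; exact pow_orderOf_eq_one z)⟩
    · rintro j ⟨hj0, hj⟩
      have : orderOf z ∣ j := orderOf_dvd_of_pow_eq_one ((mem_iff j).mp hj)
      rw [hd] at this
      exact Nat.le_of_dvd hj0 this
end
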